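/- Define operators on Λ: e_n (multiplication by the elementary symmetric function) and e*_n = e_n^⊥ (the adjoint skewing operator). Then for all m, n ≥ 1: e*_m ∘ e_n − e_n ∘ e*_m = e*_{m−1} ∘ e_{n−1}. -/

import Mathlib

open MvPolynomial PowerSeries

/-- A model of the ring `Λ` of symmetric functions over `ℚ`: the polynomial ring
`ℚ[p₁, p₂, …]` on the power sums, where the variable `X n` represents `p_{n+1}`. -/
abbrev Lam : Type := MvPolynomial ℕ ℚ

/-- The power sum `p_n ∈ Λ` (for `n ≥ 1`). -/
noncomputable def pVar (n : ℕ) : Lam := MvPolynomial.X (n - 1)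

/-- The exponential of a formal power series with vanishing constant term. -/
noncomputable def psExp (F : PowerSeries Lam) : PowerSeries Lam :=
  PowerSeries.mk fun N =>
    ∑ k ∈ Finset.range (N + 1), (k.factorial : ℚ)⁻¹ • PowerSeries.coeff N (F ^ k)

/-- The complete homogeneous symmetric function `h_n ∈ Λ`, defined via the generating
function `∑_{n≥0} h_n z^n = exp (∑_{n≥1} p_n z^n / n)`; in particular `h_0 = 1`. -/
noncomputable def hPoly (n : ℕ) : Lam :=
  PowerSeries.coeff n
    (psExp (PowerSeries.mk fun k => if k = 0 then 0 else (k : ℚ)⁻¹ • pVar k))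

/-- The quantity `z_λ = ∏ᵢ i^{mᵢ(λ)} mᵢ(λ)!` attached to the monomial `p_λ = ∏ p_i^{mᵢ}`. -/
noncomputable def zWeight (d : ℕ →₀ ℕ) : ℚ :=
  d.prod fun n k => ((n : ℚ) + 1) ^ k * (k.factorial : ℚ)

/-- The Hall inner product on `Λ`, for which `⟨p_λ, p_μ⟩ = z_λ δ_{λμ}` (equivalently, the
Schur functions form an orthonormal basis). -/
noncomputable def hallForm (f g : Lam) : ℚ :=
  ∑ d ∈ f.support, MvPolynomial.coeff d f * MvPolynomial.coeff d g * zWeight d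

/-- The elementary symmetric function `e_n ∈ Λ`, defined via the generating function
`∑_{n≥0} e_n z^n = exp (∑_{n≥1} (-1)^{n-1} p_n z^n / n)`; in particular `e_0 = 1`. -/
noncomputable def ePoly (n : ℕ) : Lam :=
  PowerSeries.coeff n
    (psExp (PowerSeries.mk fun k =>
      if k = 0 then 0 else ((-1 : ℚ) ^ (k - 1) * (k : ℚ)⁻¹) • pVar k))

/-- Multiplication by `e_n` as a linear operator on `Λ`. -/
noncomputable def eMul (n : ℕ) : Module.End ℚ Lam := LinearMap.mulLeft ℚ (ePoly n)

/-!
Multiplication by the power sum `p_k` has Hall adjoint `k ∂/∂p_k`, and differentiating the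
generating function `∑ e_n z^n = exp (∑ (-1)^(k-1) p_k z^k / k)` gives
`k ∂e_m/∂p_k = (-1)^(k-1) e_{m-k}`; by adjunction `[e*_m, p_k] = (-1)^(k-1) e*_{m-k}`.
Newton's identity `n e_n = ∑_k (-1)^(k-1) p_k e_{n-k}` then writes `n [e*_m, e_n]` in terms of
these commutators and of `[e*_m, e_j]` for `j < n`, and strong induction on `n` closes the
recursion.
-/

theorem zWeight_ne_zero (d : ℕ →₀ ℕ) : zWeight d ≠ 0 :=
  Finset.prod_ne_zero_iff.mpr fun _ _ => by positivity

theorem zWeight_single_add (i : ℕ) (d : ℕ →₀ ℕ) :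
    zWeight (Finsupp.single i 1 + d) = ((i : ℚ) + 1) * ((d i : ℚ) + 1) * zWeight d := by
  classical
  have h0 : ∀ j : ℕ, ((j : ℚ) + 1) ^ 0 * ((Nat.factorial 0 : ℕ) : ℚ) = 1 := by simp
  unfold zWeight
  rw [← Finsupp.mul_prod_erase' _ i _ h0, ← Finsupp.mul_prod_erase' d i _ h0,
    Finsupp.erase_add, Finsupp.erase_single, zero_add, Finsupp.add_apply,
    Finsupp.single_eq_same, add_comm 1, Nat.factorial_succ, pow_succ]
  push_cast
  ring

theorem hallForm_eq_sum_of_support_subset (f g : Lam) {s : Finset (ℕ →₀ ℕ)} (hs : f.support ⊆ s) :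
    hallForm f g = ∑ d ∈ s, coeff d f * coeff d g * zWeight d :=
  Finset.sum_subset hs fun d _ hd => by rw [notMem_support_iff.mp hd, zero_mul, zero_mul]

theorem hallForm_comm (f g : Lam) : hallForm f g = hallForm g f := by
  rw [hallForm_eq_sum_of_support_subset f g Finset.subset_union_left,
    hallForm_eq_sum_of_support_subset g f Finset.subset_union_right]
  exact Finset.sum_congr rfl fun d _ => by ring

theorem hallForm_sub_right (f g₁ g₂ : Lam) :
    hallForm f (g₁ - g₂) = hallForm f g₁ - hallForm f g₂ := by
  simp only [hallForm, coeff_sub, mul_sub, sub_mul, Finset.sum_sub_distrib]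

theorem hallForm_smul_right (c : ℚ) (f g : Lam) : hallForm f (c • g) = c * hallForm f g := by
  simp only [hallForm, MvPolynomial.coeff_smul, smul_eq_mul, Finset.mul_sum]
  exact Finset.sum_congr rfl fun d _ => by ring

theorem hallForm_sub_left (f₁ f₂ g : Lam) :
    hallForm (f₁ - f₂) g = hallForm f₁ g - hallForm f₂ g := by
  rw [hallForm_comm, hallForm_sub_right, hallForm_comm g, hallForm_comm g]

theorem hallForm_smul_left (c : ℚ) (f g : Lam) : hallForm (c • f) g = c * hallForm f g := by
  rw [hallForm_comm, hallForm_smul_right, hallForm_comm]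

theorem hallForm_monomial_one_right (f : Lam) (d : ℕ →₀ ℕ) :
    hallForm f (monomial d 1) = coeff d f * zWeight d := by
  rw [hallForm_comm, hallForm, support_monomial, if_neg one_ne_zero, Finset.sum_singleton,
    MvPolynomial.coeff_monomial, if_pos rfl, one_mul]

theorem ext_hallForm_right {f₁ f₂ : Lam} (h : ∀ g, hallForm f₁ g = hallForm f₂ g) : f₁ = f₂ := by
  ext d
  have := h (monomial d 1)
  rwa [hallForm_monomial_one_right, hallForm_monomial_one_right,
    mul_left_inj' (zWeight_ne_zero d)] at this

/-- `X i` stands for `p_{i+1}`, so `pPerp i = (i+1) ∂/∂p_{i+1}` is the skewing operator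
`p_{i+1}^⊥`. -/
noncomputable def pPerp (i : ℕ) : Derivation ℚ Lam Lam := ((i : ℚ) + 1) • pderiv i

theorem hallForm_X_mul (i : ℕ) (f g : Lam) : hallForm (X i * f) g = hallForm f (pPerp i g) := by
  simp only [pPerp, Derivation.smul_apply, hallForm, support_X_mul, Finset.sum_map,
    addLeftEmbedding_apply, coeff_X_mul, MvPolynomial.coeff_smul, coeff_pderiv,
    zWeight_single_add, smul_eq_mul]
  exact Finset.sum_congr rfl fun d _ => by rw [add_comm (Finsupp.single i 1)]; ring

section MapPowerSeries

variable {R A : Type*} [CommRing R] [CommRing A] [Algebra R A]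

noncomputable def Derivation.mapPowerSeries (D : Derivation R A A) :
    Derivation R (PowerSeries A) (PowerSeries A) :=
  Derivation.mk'
    { toFun := fun f => PowerSeries.mk fun n => D (PowerSeries.coeff n f)
      map_add' := fun f g => by ext n; simp
      map_smul' := fun r f => by ext n; simp }
    fun f g => by
      rw [smul_eq_mul, smul_eq_mul, mul_comm g]
      ext n
      simp only [LinearMap.coe_mk, AddHom.coe_mk, PowerSeries.coeff_mk, map_add,
        PowerSeries.coeff_mul, map_sum, Derivation.leibniz, ← Finset.sum_add_distrib]
      exact Finset.sum_congr rfl fun p _ => by ring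

@[simp]
theorem Derivation.coeff_mapPowerSeries (D : Derivation R A A) (n : ℕ) (f : PowerSeries A) :
    PowerSeries.coeff n (D.mapPowerSeries f) = D (PowerSeries.coeff n f) := by
  simp [Derivation.mapPowerSeries]

end MapPowerSeries

theorem PowerSeries.coeff_X_mul_derivative {R : Type*} [CommSemiring R] (f : PowerSeries R)
    (n : ℕ) : PowerSeries.coeff n (PowerSeries.X * PowerSeries.derivative R f) =
      n • PowerSeries.coeff n f := by
  cases n with
  | zero => simp
  | succ n =>
    rw [PowerSeries.coeff_succ_X_mul, PowerSeries.coeff_derivative, nsmul_eq_mul, mul_comm]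
    push_cast
    rfl

section Exp

variable {F : PowerSeries Lam}

noncomputable def expPartialSum (F : PowerSeries Lam) (N : ℕ) : PowerSeries Lam :=
  ∑ k ∈ Finset.range (N + 1), (k.factorial : ℚ)⁻¹ • F ^ k

theorem coeff_pow_of_lt (hF : constantCoeff F = 0) {m k : ℕ} (h : m < k) :
    PowerSeries.coeff m (F ^ k) = 0 :=
  X_pow_dvd_iff.mp (pow_dvd_pow_of_dvd (X_dvd_iff.mpr hF) k) m h

theorem X_pow_dvd_psExp_sub_expPartialSum (hF : constantCoeff F = 0) (N : ℕ) :
    PowerSeries.X ^ (N + 1) ∣ psExp F - expPartialSum F N := by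
  refine X_pow_dvd_iff.mpr fun m hm => ?_
  rw [map_sub, sub_eq_zero, psExp, coeff_mk, expPartialSum, map_sum]
  refine Finset.sum_subset (Finset.range_subset_range.mpr (by omega)) fun k _ hk => ?_
  rw [Finset.mem_range, not_lt] at hk
  rw [coeff_pow_of_lt hF (by omega), smul_zero]

theorem derivation_expPartialSum (D : Derivation ℚ (PowerSeries Lam) (PowerSeries Lam))
    (N : ℕ) : D (expPartialSum F (N + 1)) = expPartialSum F N * D F := by
  rw [expPartialSum, map_sum, Finset.sum_range_succ', pow_zero, D.map_smul,
    Derivation.map_one_eq_zero, smul_zero, add_zero, expPartialSum, Finset.sum_mul]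
  refine Finset.sum_congr rfl fun k _ => ?_
  rw [D.map_smul, Derivation.leibniz_pow, Nat.add_sub_cancel, smul_eq_mul, smul_mul_assoc,
    ← Nat.cast_smul_eq_nsmul ℚ, smul_smul, Nat.factorial_succ]
  congr 1
  push_cast
  field_simp

/-- Since `D` acts coefficientwise (`hD`), the `N`-th coefficients of both sides only see the
partial sums of the exponential series, on which `D` obeys the chain rule. -/
theorem derivation_psExp (D : Derivation ℚ (PowerSeries Lam) (PowerSeries Lam))
    (hD : ∀ N G, PowerSeries.coeff N G = 0 → PowerSeries.coeff N (D G) = 0)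
    (hF : constantCoeff F = 0) :
    D (psExp F) = psExp F * D F := by
  ext N
  have hlhs : PowerSeries.coeff N (D (psExp F)) =
      PowerSeries.coeff N (D (expPartialSum F (N + 1))) := by
    rw [← sub_eq_zero, ← map_sub, ← map_sub]
    exact hD N _ (X_pow_dvd_iff.mp (X_pow_dvd_psExp_sub_expPartialSum hF (N + 1)) N (by omega))
  have hrhs : PowerSeries.coeff N (psExp F * D F) =
      PowerSeries.coeff N (expPartialSum F N * D F) := by
    rw [← sub_eq_zero, ← map_sub, ← sub_mul]
    exact X_pow_dvd_iff.mp
      (dvd_mul_of_dvd_left (X_pow_dvd_psExp_sub_expPartialSum hF N) _) N (by omega)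
  rw [hlhs, hrhs, derivation_expPartialSum]

end Exp

section Elementary

noncomputable def eLog : PowerSeries Lam :=
  PowerSeries.mk fun k => if k = 0 then 0 else ((-1 : ℚ) ^ (k - 1) * (k : ℚ)⁻¹) • pVar k

theorem coeff_psExp_eLog (n : ℕ) : PowerSeries.coeff n (psExp eLog) = ePoly n := rfl

theorem constantCoeff_eLog : PowerSeries.constantCoeff eLog = 0 := by
  rw [← PowerSeries.coeff_zero_eq_constantCoeff_apply, eLog, PowerSeries.coeff_mk, if_pos rfl]

theorem ePoly_zero : ePoly 0 = 1 := by
  simp [ePoly, psExp]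

theorem pPerp_X (i j : ℕ) : pPerp i (X j) = if j = i then (i + 1 : ℚ) • 1 else 0 := by
  simp [pPerp, pderiv_X, Pi.single_apply]

theorem mapPowerSeries_pPerp_eLog (i : ℕ) :
    (pPerp i).mapPowerSeries eLog =
      ((-1 : ℚ) ^ i) • (PowerSeries.X : PowerSeries Lam) ^ (i + 1) := by
  refine PowerSeries.ext fun k => ?_
  rw [Derivation.coeff_mapPowerSeries, PowerSeries.coeff_smul, PowerSeries.coeff_X_pow, eLog,
    PowerSeries.coeff_mk]
  rcases eq_or_ne k 0 with rfl | hk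
  · simp
  · rw [if_neg hk, Derivation.map_smul, pVar, pPerp_X]
    by_cases hki : k = i + 1
    · subst hki
      rw [Nat.add_sub_cancel, if_pos rfl, if_pos rfl, smul_smul]
      congr 1
      push_cast
      field_simp
    · rw [if_neg (by omega), if_neg hki, smul_zero, smul_zero]

theorem pPerp_ePoly (i m : ℕ) :
    pPerp i (ePoly m) = if i + 1 ≤ m then (-1 : ℚ) ^ i • ePoly (m - (i + 1)) else 0 := by
  have h := congrArg (PowerSeries.coeff m) <|
    derivation_psExp ((pPerp i).mapPowerSeries) (fun N G hG => by simp [hG]) constantCoeff_eLog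
  rw [Derivation.coeff_mapPowerSeries, coeff_psExp_eLog, mapPowerSeries_pPerp_eLog,
    mul_smul_comm, PowerSeries.coeff_smul, PowerSeries.coeff_mul_X_pow'] at h
  rw [h, coeff_psExp_eLog]
  split_ifs <;> simp

theorem coeff_succ_X_mul_derivative_eLog (k : ℕ) :
    PowerSeries.coeff (k + 1) (PowerSeries.X * PowerSeries.derivative Lam eLog) =
      (-1 : ℚ) ^ k • X k := by
  rw [PowerSeries.coeff_X_mul_derivative, ← Nat.cast_smul_eq_nsmul ℚ, eLog, PowerSeries.coeff_mk,
    if_neg k.succ_ne_zero, smul_smul, pVar, Nat.add_sub_cancel]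
  congr 1
  push_cast
  field_simp

theorem newton (n : ℕ) :
    (n : ℚ) • ePoly n = ∑ i ∈ Finset.range n, (-1 : ℚ) ^ i • (X i * ePoly (n - (i + 1))) := by
  let D : Derivation ℚ (PowerSeries Lam) (PowerSeries Lam) :=
    (PowerSeries.X : PowerSeries Lam) • (PowerSeries.derivative Lam).restrictScalars ℚ
  have hD (f : PowerSeries Lam) : D f = PowerSeries.X * PowerSeries.derivative Lam f := rfl
  have h := congrArg (PowerSeries.coeff n) <| derivation_psExp D
    (fun N G hG => by rw [hD G, PowerSeries.coeff_X_mul_derivative, hG, smul_zero])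
    constantCoeff_eLog
  rw [hD, hD, PowerSeries.coeff_X_mul_derivative, coeff_psExp_eLog, PowerSeries.coeff_mul,
    ← Finset.Nat.sum_antidiagonal_swap] at h
  simp only [Prod.fst_swap, Prod.snd_swap] at h
  rw [Nat.cast_smul_eq_nsmul, h, Finset.Nat.sum_antidiagonal_eq_sum_range_succ
    (fun b a => PowerSeries.coeff a (psExp eLog) *
      PowerSeries.coeff b (PowerSeries.X * PowerSeries.derivative Lam eLog)),
    Finset.sum_range_succ', PowerSeries.coeff_zero_X_mul, mul_zero, add_zero]
  refine Finset.sum_congr rfl fun i _ => ?_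
  rw [coeff_succ_X_mul_derivative_eLog, coeff_psExp_eLog, mul_smul_comm, mul_comm]

end Elementary

theorem Ring.lie_mul {A : Type*} [Ring A] (a b c : A) : ⁅a, b * c⁆ = ⁅a, b⁆ * c + b * ⁅a, c⁆ := by
  simp only [Ring.lie_def, mul_sub, sub_mul, mul_assoc]
  abel

section Skewing

noncomputable def pMul (i : ℕ) : Module.End ℚ Lam := LinearMap.mulLeft ℚ (X i)

theorem eMul_zero : eMul 0 = 1 :=
  LinearMap.ext fun f => by simp [eMul, ePoly_zero]

theorem newton_eMul (n : ℕ) :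
    (n : ℚ) • eMul n = ∑ i ∈ Finset.range n, (-1 : ℚ) ^ i • (pMul i * eMul (n - (i + 1))) := by
  refine LinearMap.ext fun f => ?_
  simp only [LinearMap.smul_apply, LinearMap.coe_sum, Finset.sum_apply, Module.End.mul_apply,
    eMul, pMul, LinearMap.mulLeft_apply, ← smul_mul_assoc, newton, Finset.sum_mul, mul_assoc]

theorem smul_lie_eMul (A : Module.End ℚ Lam) (n : ℕ) :
    (n : ℚ) • ⁅A, eMul n⁆ = ∑ i ∈ Finset.range n,
      (-1 : ℚ) ^ i • (⁅A, pMul i⁆ * eMul (n - (i + 1)) + pMul i * ⁅A, eMul (n - (i + 1))⁆) := by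
  have hlie (c : ℚ) (B : Module.End ℚ Lam) : ⁅A, c • B⁆ = c • ⁅A, B⁆ := by
    simp only [Ring.lie_def, mul_smul_comm, smul_mul_assoc, smul_sub]
  rw [← hlie, newton_eMul, Ring.lie_def, Finset.mul_sum, Finset.sum_mul, ← Finset.sum_sub_distrib]
  simp only [← Ring.lie_def, hlie, Ring.lie_mul]

theorem sum_pMul_mul_eMul (A : Module.End ℚ Lam) (n : ℕ) :
    ∑ i ∈ Finset.range n, (-1 : ℚ) ^ i • (pMul i * A * eMul (n - (i + 1))) =
      (n : ℚ) • (A * eMul n) -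
        ∑ i ∈ Finset.range n, (-1 : ℚ) ^ i • (⁅A, pMul i⁆ * eMul (n - (i + 1))) := by
  simp only [← mul_smul_comm, newton_eMul, Finset.mul_sum, ← Finset.sum_sub_distrib,
    Ring.lie_def, ← mul_assoc, ← sub_mul, sub_sub_cancel]

variable (estar : ℕ → Module.End ℚ Lam)
  (hadj : ∀ (n : ℕ) (f g : Lam), hallForm (estar n f) g = hallForm f (ePoly n * g))
include hadj

theorem neg_one_pow_smul_lie_estar_pMul (m i : ℕ) :
    (-1 : ℚ) ^ i • ⁅estar m, pMul i⁆ = if i + 1 ≤ m then estar (m - (i + 1)) else 0 := by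
  refine LinearMap.ext fun f => ext_hallForm_right fun g => ?_
  have hleibniz : pPerp i (ePoly m * g) - ePoly m * pPerp i g = pPerp i (ePoly m) * g := by
    rw [Derivation.leibniz, smul_eq_mul, smul_eq_mul, add_sub_cancel_left, mul_comm]
  calc hallForm (((-1 : ℚ) ^ i • ⁅estar m, pMul i⁆) f) g
      = (-1 : ℚ) ^ i * hallForm f (pPerp i (ePoly m) * g) := by
        rw [LinearMap.smul_apply, hallForm_smul_left, Ring.lie_def, LinearMap.sub_apply,
          hallForm_sub_left, Module.End.mul_apply, Module.End.mul_apply, pMul,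
          LinearMap.mulLeft_apply, LinearMap.mulLeft_apply, hadj, hallForm_X_mul, hallForm_X_mul,
          hadj, ← hallForm_sub_right, hleibniz]
    _ = hallForm ((if i + 1 ≤ m then estar (m - (i + 1)) else 0) f) g := by
        rw [pPerp_ePoly]
        split_ifs
        · rw [smul_mul_assoc, hallForm_smul_right, ← hadj, ← mul_assoc, ← pow_add,
            Even.neg_one_pow ⟨i, rfl⟩, one_mul]
        · simp [hallForm]

theorem sum_lie_estar_succ_pMul (a n : ℕ) :
    ∑ i ∈ Finset.range (n + 1), (-1 : ℚ) ^ i • (⁅estar (a + 1), pMul i⁆ * eMul (n - i)) =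
      estar a * eMul n +
        ∑ i ∈ Finset.range n, (-1 : ℚ) ^ i • (⁅estar a, pMul i⁆ * eMul (n - (i + 1))) := by
  simp only [← smul_mul_assoc, neg_one_pow_smul_lie_estar_pMul estar hadj]
  rw [Finset.sum_range_succ', add_comm]
  simp

theorem lie_estar_succ_eMul_succ (a n : ℕ) : ⁅estar (a + 1), eMul (n + 1)⁆ = estar a * eMul n := by
  induction n using Nat.strong_induction_on with
  | _ n ih =>
  refine smul_right_injective _ (by positivity : ((n + 1 : ℕ) : ℚ) ≠ 0) ?_
  have hQ := sum_lie_estar_succ_pMul estar hadj a n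
  set Q := ∑ i ∈ Finset.range n, (-1 : ℚ) ^ i • (⁅estar a, pMul i⁆ * eMul (n - (i + 1)))
  calc ((n + 1 : ℕ) : ℚ) • ⁅estar (a + 1), eMul (n + 1)⁆
      = ∑ i ∈ Finset.range (n + 1), (-1 : ℚ) ^ i • (⁅estar (a + 1), pMul i⁆ * eMul (n - i)) +
          ∑ i ∈ Finset.range (n + 1),
            (-1 : ℚ) ^ i • (pMul i * ⁅estar (a + 1), eMul (n - i)⁆) := by
        simp only [smul_lie_eMul, Nat.add_sub_add_right, smul_add, Finset.sum_add_distrib]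
    _ = (estar a * eMul n + Q) +
          ∑ i ∈ Finset.range n, (-1 : ℚ) ^ i • (pMul i * estar a * eMul (n - (i + 1))) := by
        rw [hQ, Finset.sum_range_succ, Nat.sub_self, eMul_zero, Ring.lie_def, mul_one, one_mul,
          sub_self, mul_zero, smul_zero, add_zero]
        refine congrArg _ (Finset.sum_congr rfl fun i hi => ?_)
        have hi : i < n := Finset.mem_range.mp hi
        obtain ⟨k, hk⟩ : ∃ k, n - i = k + 1 := ⟨n - (i + 1), by omega⟩
        rw [hk, ih k (by omega), mul_assoc, show k = n - (i + 1) by omega]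
    _ = (estar a * eMul n + Q) + ((n : ℚ) • (estar a * eMul n) - Q) := by
        rw [sum_pMul_mul_eMul]
    _ = ((n + 1 : ℕ) : ℚ) • (estar a * eMul n) := by
        push_cast
        module

end Skewing

/-- Let `e_n` denote multiplication by the `n`-th elementary symmetric function on `Λ`, and
let `e*_n` be its adjoint with respect to the Hall inner product (the skewing operator).
Then for all `m, n ≥ 1`: `e*_m ∘ e_n - e_n ∘ e*_m = e*_{m-1} ∘ e_{n-1}` (with
`e_0 = e*_0 = id`; note that the adjointness hypothesis forces `e*_0 = id`). -/
theorem estar_comp_e_commutation_relation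
    (estar : ℕ → Module.End ℚ Lam)
    (hadj : ∀ (n : ℕ) (f g : Lam), hallForm (estar n f) g = hallForm f (ePoly n * g))
    (m n : ℕ) (hm : 1 ≤ m) (hn : 1 ≤ n) :
    estar m * eMul n - eMul n * estar m = estar (m - 1) * eMul (n - 1) := by
  obtain ⟨a, rfl⟩ := Nat.exists_eq_add_of_le' hm
  obtain ⟨b, rfl⟩ := Nat.exists_eq_add_of_le' hn
  exact lie_estar_succ_eMul_succ estar hadj a b
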